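/- arXiv:1411.3878 — 2 statements merged into one kernel-verified Lean document; each statement's English description precedes it below -/
import Mathlib

section
/- Let p be a prime number and define the partial map t on the Łukasiewicz chain Ł_{p+1} = {0, 1/p, 2/p, ..., 1} by t(a) = 1 - r·a where r is the positive integer with r·a < 1 and (r+1)·a ≥ 1 (operations truncated to [0,1]). Then for every a in Ł_{p+1} with a ≠ 0 and a ≠ 1, there exists an integer k ≥ 0 such that t^k(a) = 1/p. -/
/-- For `p` prime, every element of the Łukasiewicz chain
`Ł_{p+1} = {m/p : 0 ≤ m ≤ p}` other than `0` and `1` is a cyclic generator: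
iterating the partial map `t(a) = 1 - r·a` (where `r` is the positive integer
with `r·a < 1 ≤ (r+1)·a`) eventually reaches `1/p`. -/
theorem stmt0 (p : ℕ) (hp : p.Prime) (t : ℝ → ℝ)
    (ht : ∀ a : ℝ, 0 < a → a < 1 → ∀ r : ℕ, 0 < r →
      (r : ℝ) * a < 1 → 1 ≤ ((r : ℝ) + 1) * a → t a = 1 - (r : ℝ) * a)
    (a : ℝ) (ha : ∃ m : ℕ, m ≤ p ∧ a = (m : ℝ) / p)
    (ha0 : a ≠ 0) (ha1 : a ≠ 1) :
    ∃ k : ℕ, t^[k] a = 1 / p := by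
  have hp0 : (0:ℝ) < p := by exact_mod_cast hp.pos
  have key : ∀ m : ℕ, 0 < m → m < p → ∃ k : ℕ, t^[k] ((m:ℝ)/p) = 1/p := by
    intro m
    induction m using Nat.strong_induction_on with
    | _ m IH =>
      intro hm0 hmlt
      rcases eq_or_lt_of_le (Nat.one_le_iff_ne_zero.mpr hm0.ne') with h1 | h1
      · exact ⟨0, by rw [← h1]; simp⟩
      · set r := p / m with hr
        have hr0 : 0 < r := Nat.div_pos hmlt.le hm0
        have hndvd : ¬ m ∣ p := by
          intro h
          rcases (hp.eq_one_or_self_of_dvd m h) with h' | h'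
          · omega
          · omega
        have hmodpos : 0 < p % m := Nat.pos_of_ne_zero
          (fun h => hndvd (Nat.dvd_of_mod_eq_zero h))
        have hdm : r * m + p % m = p := Nat.div_add_mod' p m
        have hrm : r * m < p := by omega
        have hrm1 : p ≤ (r + 1) * m := by nlinarith [Nat.mod_lt p hm0]
        have h0a : 0 < (m:ℝ)/p := div_pos (by exact_mod_cast hm0) hp0
        have ha1' : (m:ℝ)/p < 1 := (div_lt_one hp0).2 (by exact_mod_cast hmlt)
        have hta : t ((m:ℝ)/p) = ((p % m : ℕ) : ℝ) / p := by
          rw [ht ((m:ℝ)/p) h0a ha1' r hr0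
            (by rw [mul_div_assoc'] ; rw [div_lt_one hp0]; exact_mod_cast hrm)
            (by rw [mul_div_assoc', le_div_iff₀ hp0, one_mul]; exact_mod_cast hrm1)]
          have : ((p % m : ℕ) : ℝ) = (p:ℝ) - r * m := by
            have h' : ((r * m + p % m : ℕ) : ℝ) = (p:ℝ) := by exact_mod_cast congrArg Nat.cast hdm
            push_cast at h'
            linarith
          rw [this]
          field_simp
        obtain ⟨k, hk⟩ := IH (p % m) (Nat.mod_lt p hm0) hmodpos
          (lt_trans (Nat.mod_lt p hm0) hmlt)
        exact ⟨k + 1, by rw [Function.iterate_succ_apply, hta, hk]⟩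
  obtain ⟨m, hmp, rfl⟩ := ha
  have hm0 : 0 < m := by
    rcases Nat.eq_zero_or_pos m with h | h
    · exfalso; apply ha0; rw [h]; simp
    · exact h
  have hmlt : m < p := by
    rcases lt_or_eq_of_le hmp with h | h
    · exact h
    · exfalso; apply ha1; rw [h]; field_simp
  exact key m hm0 hmlt
end

section
/- Let p be prime and 0 < m < p with gcd(m,p) = 1. Define the sequence m₀ = m and m_{j+1} = p - r_j·m_j where r_j is the unique positive integer with r_j·m_j < p ≤ (r_j+1)·m_j. Then the sequence (m_j) is a strictly decreasing sequence of positive integers less than p until it reaches 1, i.e., there exists k with m_k = 1; moreover each m_j satisfies 0 < m_j < p. -/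
/-- numerator form of Proposition 1.1: let `p` be prime,
`0 < m < p`, `gcd(m,p) = 1`, and let `M` be a sequence with `M 0 = m` and
`M (j+1) = p - r_j · M j`, where `r_j` is the positive integer with
`r_j · M j < p ≤ (r_j + 1) · M j`. Then every `M j` satisfies `0 < M j < p`,
the sequence strictly decreases until it reaches `1`, and some `M k = 1`. -/
theorem stmt19 (p m : ℕ) (hp : p.Prime) (hm0 : 0 < m) (hmp : m < p)
    (hcop : Nat.gcd m p = 1) (M : ℕ → ℕ) (hM0 : M 0 = m)
    (hstep : ∀ j, ∃ r : ℕ, 0 < r ∧ r * M j < p ∧ p ≤ (r + 1) * M j ∧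
      M (j + 1) = p - r * M j) :
    (∀ j, 0 < M j ∧ M j < p) ∧
      (∀ j, M j ≠ 1 → M (j + 1) < M j) ∧
      (∃ k, M k = 1) := by
  have hbound : ∀ j, 0 < M j ∧ M j < p := by
    intro j
    induction j with
    | zero => exact ⟨hM0 ▸ hm0, hM0 ▸ hmp⟩
    | succ j ih =>
      obtain ⟨r, hr, h1, h2, h3⟩ := hstep j
      constructor
      · rw [h3]; omega
      · rw [h3]
        have : 0 < r * M j := Nat.mul_pos hr ih.1
        omega
  have hdec : ∀ j, M j ≠ 1 → M (j + 1) < M j := by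
    intro j hne
    obtain ⟨r, hr, h1, h2, h3⟩ := hstep j
    obtain ⟨hpos, hlt⟩ := hbound j
    -- M (j+1) = p - r * M j ≤ M j since p ≤ (r+1) * M j
    have hle : M (j + 1) ≤ M j := by
      rw [h3]
      have : (r + 1) * M j = r * M j + M j := by ring
      omega
    rcases lt_or_eq_of_le hle with h | h
    · exact h
    -- equality case: p = (r+1) * M j, so M j ∣ p, M j < p, M j ≠ 1 contradiction
    exfalso
    have hx : (r + 1) * M j = r * M j + M j := by ring
    have hpeq : p = (r + 1) * M j := by
      rw [h3] at h
      omega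
    have hdvd : M j ∣ p := ⟨r + 1, by rw [hpeq, Nat.mul_comm]⟩
    rcases (Nat.Prime.eq_one_or_self_of_dvd hp _ hdvd) with h1' | h1'
    · exact hne h1'
    · omega
  refine ⟨hbound, hdec, ?_⟩
  by_contra hno
  push_neg at hno
  have hstrict : ∀ j, M (j + 1) < M j := fun j => hdec j (hno j)
  have key : ∀ j, M j + j ≤ M 0 := by
    intro j
    induction j with
    | zero => omega
    | succ j ih => have := hstrict j; omega
  have := key (M 0)
  have := (hbound (M 0)).1
  omega
end
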